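/- arXiv:2604.01821 — 5 statements merged into one kernel-verified Lean document; each statement's English description precedes it below -/
import Mathlib

section
/- Let X be a measurable space, n ∈ ℕ, 𝔻 a probability measure on X, and f = T(P₀, P₁) a trade-off function given by probability measures P₀, P₁ on some measurable space. If an algorithm A is f-DP, then for every n and every probability measure 𝔻 on X, A is f_{n,𝔻}-WMIP. -/
open MeasureTheory ProbabilityTheory
open scoped ProbabilityTheory NNReal ENNReal

/-- The trade-off function `T(P,Q)(α) = inf {∫ (1-φ) dQ : φ a test with ∫ φ dP ≤ α}`,
where a test is a measurable function with values in `[0,1]`. -/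
noncomputable def tradeoff {Ω : Type*} [MeasurableSpace Ω] (P Q : Measure Ω) (α : ℝ) : ℝ :=
  sInf { r : ℝ | ∃ φ : Ω → ℝ, Measurable φ ∧ (∀ ω, 0 ≤ φ ω) ∧ (∀ ω, φ ω ≤ 1) ∧
    (∫ ω, φ ω ∂P) ≤ α ∧ r = ∫ ω, (1 - φ ω) ∂Q }

/-- Two datasets are adjacent if they differ in at most one coordinate. -/
def Adjacent {X : Type*} {n : ℕ} (D D' : Fin n → X) : Prop :=
  ∃ i : Fin n, ∀ j : Fin n, j ≠ i → D j = D' j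

/-- An algorithm (Markov kernel on datasets) is `f`-DP if `T(A(D), A(D')) ≥ f` on `[0,1]`
for every pair of adjacent datasets. -/
def fDP {X Y : Type*} [MeasurableSpace X] [MeasurableSpace Y] {n : ℕ}
    (A : Kernel (Fin n → X) Y) (f : ℝ → ℝ) : Prop :=
  ∀ D D' : Fin n → X, Adjacent D D' → ∀ α ∈ Set.Icc (0 : ℝ) 1, f α ≤ tradeoff (A D) (A D') α

/-- `Pin x A 𝔻`: the output distribution of `A` on a dataset consisting of the target
record `x` together with `n-1` i.i.d. records from `𝔻`. -/
noncomputable def Pin {X Y : Type*} [MeasurableSpace X] [MeasurableSpace Y] {n : ℕ}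
    (hn : 0 < n) (x : X) (A : Kernel (Fin n → X) Y) (𝔻 : Measure X) : Measure Y :=
  (Measure.pi fun _ : Fin n => 𝔻).bind (fun D => A (Function.update D ⟨0, hn⟩ x))

/-- `Pout A 𝔻`: the output distribution of `A` on a dataset of `n` i.i.d. records from `𝔻`. -/
noncomputable def Pout {X Y : Type*} [MeasurableSpace X] [MeasurableSpace Y] {n : ℕ}
    (A : Kernel (Fin n → X) Y) (𝔻 : Measure X) : Measure Y :=
  (Measure.pi fun _ : Fin n => 𝔻).bind (fun D => A D)

/-- `A` is `f`-worst-case membership inference private (WMIP) w.r.t. dataset size `n`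
and distribution `𝔻` if `T(Pout, Pin x) ≥ f` on `[0,1]` for every `x`. -/
def WMIP {X Y : Type*} [MeasurableSpace X] [MeasurableSpace Y] {n : ℕ}
    (hn : 0 < n) (A : Kernel (Fin n → X) Y) (f : ℝ → ℝ) (𝔻 : Measure X) : Prop :=
  ∀ x : X, ∀ α ∈ Set.Icc (0 : ℝ) 1, f α ≤ tradeoff (Pout A 𝔻) (Pin hn x A 𝔻) α

/-! A test `φ` between the two mixtures has, on each dataset `D`, level `g D = ∫ φ ∂A(D)` and
type II error at least `f (g D)` against `A(D')`, where `D'` replaces the first record of `D` by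
`x`: the datasets `D` and `D'` are adjacent. Averaging over `D` and using Jensen's inequality for
the convex, non-increasing trade-off function `f`, the type II error of `φ` between the mixtures is
at least `∫ f ∘ g ≥ f (∫ g) ≥ f α`. -/

open Set

namespace ConvexOn

theorem add_rightDeriv_mul_sub_le {S : Set ℝ} {f : ℝ → ℝ} {x y : ℝ} (hf : ConvexOn ℝ S f)
    (hx : x ∈ interior S) (hy : y ∈ S) :
    f x + derivWithin f (Ioi x) x * (y - x) ≤ f y := by
  rcases lt_trichotomy y x with hyx | rfl | hxy
  · have h := (hf.leftDeriv_le_rightDeriv_of_mem_interior hx).trans'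
      (hf.slope_le_leftDeriv_of_mem_interior hy hx hyx)
    rw [slope_def_field, div_le_iff₀ (sub_pos.2 hyx)] at h
    linarith
  · simp
  · have h := hf.rightDeriv_le_slope_of_mem_interior hx hy hxy
    rw [slope_def_field, le_div_iff₀ (sub_pos.2 hxy)] at h
    linarith

/-- Unlike `ConvexOn.map_integral_le`, this needs no continuity of `f`: a positive mean lies in
the interior of `[0, ∞)`, where `f` has a supporting line, and a zero mean forces `g = 0` a.e. -/
theorem map_integral_le_of_nonneg {α : Type*} [MeasurableSpace α] {μ : Measure α}
    [IsProbabilityMeasure μ] {f : ℝ → ℝ} {g : α → ℝ} (hf : ConvexOn ℝ (Ici 0) f)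
    (hg0 : 0 ≤ᵐ[μ] g) (hgi : Integrable g μ) (hfgi : Integrable (f ∘ g) μ) :
    f (∫ a, g a ∂μ) ≤ ∫ a, f (g a) ∂μ := by
  rcases (integral_nonneg_of_ae hg0).eq_or_lt with hm | hm
  · have hg : g =ᵐ[μ] 0 := (integral_eq_zero_iff_of_nonneg_ae hg0 hgi).1 hm.symm
    have hfg : (fun a => f (g a)) =ᵐ[μ] fun _ => f 0 := hg.mono fun a ha => by simp [ha]
    simp [← hm, integral_congr_ae hfg]
  · set m := ∫ a, g a ∂μ
    set s := derivWithin f (Ioi m) m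
    have hline : ∀ᵐ a ∂μ, f m + s * (g a - m) ≤ f (g a) := hg0.mono fun a ha =>
      hf.add_rightDeriv_mul_sub_le (by rwa [interior_Ici]) ha
    have hsi : Integrable (fun a => s * (g a - m)) μ :=
      (hgi.sub (integrable_const m)).const_mul s
    calc f m = ∫ a, (f m + s * (g a - m)) ∂μ := by
          rw [integral_add (integrable_const _) hsi, integral_const_mul,
            integral_sub hgi (integrable_const m)]
          simp [m]
      _ ≤ ∫ a, f (g a) ∂μ := integral_mono_ae ((integrable_const _).add hsi) hfgi hline

end ConvexOn

section Integrability

variable {α β : Type*} [MeasurableSpace α] [MeasurableSpace β] {μ : Measure α}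

theorem MeasureTheory.Measure.integral_comp [SFinite μ] {κ : Kernel α β} [IsSFiniteKernel κ]
    {f : β → ℝ} (hf : Integrable f (κ ∘ₘ μ)) :
    ∫ b, f b ∂(κ ∘ₘ μ) = ∫ a, ∫ b, f b ∂κ a ∂μ := by
  rw [Measure.comp_eq_comp_const_apply] at hf ⊢
  rw [Kernel.integral_comp hf, Kernel.const_apply]

theorem MeasureTheory.Measure.integrable_integral_of_integrable_comp [SFinite μ]
    {κ : Kernel α β} [IsSFiniteKernel κ] {f : β → ℝ} (hf : Integrable f (κ ∘ₘ μ)) :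
    Integrable (fun a => ∫ b, f b ∂κ a) μ := by
  rw [Measure.comp_eq_comp_const_apply] at hf
  simpa using hf.integral_comp

theorem AntitoneOn.integrable_comp [IsFiniteMeasure μ] {f : ℝ → ℝ} {g : α → ℝ} {a b : ℝ}
    (hf : AntitoneOn f (Icc a b)) (hg : AEMeasurable g μ) (hgab : ∀ᵐ x ∂μ, g x ∈ Icc a b) :
    Integrable (fun x => f (g x)) μ := by
  have hfm : AEMeasurable f (μ.map g) := by
    rw [← Measure.restrict_eq_self_of_ae_mem ((ae_map_iff hg measurableSet_Icc).2 hgab)]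
    exact aemeasurable_restrict_of_antitoneOn measurableSet_Icc hf
  refine Integrable.of_bound (hfm.comp_aemeasurable hg).aestronglyMeasurable (max |f b| |f a|) ?_
  filter_upwards [hgab] with x hx
  exact abs_le_max_abs_abs (hf hx ⟨hx.1.trans hx.2, le_rfl⟩ hx.2)
    (hf ⟨le_rfl, hx.1.trans hx.2⟩ hx hx.1)

theorem integrable_of_nonneg_of_le_one [IsFiniteMeasure μ] {φ : α → ℝ} (hφ : Measurable φ)
    (h0 : ∀ a, 0 ≤ φ a) (h1 : ∀ a, φ a ≤ 1) : Integrable φ μ :=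
  Integrable.of_bound hφ.aestronglyMeasurable 1 <| ae_of_all _ fun a => by
    rw [Real.norm_eq_abs, abs_le]
    constructor <;> linarith [h0 a, h1 a]

end Integrability

section Tradeoff

variable {Ω : Type*} [MeasurableSpace Ω] {P Q : Measure Ω}

theorem tradeoff_le_integral {α : ℝ} {φ : Ω → ℝ} (hφ : Measurable φ) (h0 : ∀ ω, 0 ≤ φ ω)
    (h1 : ∀ ω, φ ω ≤ 1) (hα : ∫ ω, φ ω ∂P ≤ α) : tradeoff P Q α ≤ ∫ ω, (1 - φ ω) ∂Q :=
  csInf_le ⟨0, by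
    rintro _ ⟨ψ, -, -, hψ1, -, rfl⟩
    exact integral_nonneg fun ω => sub_nonneg.2 (hψ1 ω)⟩ ⟨φ, hφ, h0, h1, hα, rfl⟩

theorem le_tradeoff {α c : ℝ} (hα : 0 ≤ α)
    (h : ∀ φ : Ω → ℝ, Measurable φ → (∀ ω, 0 ≤ φ ω) → (∀ ω, φ ω ≤ 1) →
      ∫ ω, φ ω ∂P ≤ α → c ≤ ∫ ω, (1 - φ ω) ∂Q) :
    c ≤ tradeoff P Q α := by
  refine le_csInf ⟨_, 0, measurable_const, fun _ => le_rfl, fun _ => zero_le_one, by simpa, rfl⟩ ?_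
  rintro _ ⟨φ, hφ, h0, h1, hφα, rfl⟩
  exact h φ hφ h0 h1 hφα

theorem exists_integral_one_sub_lt_tradeoff_add {α ε : ℝ} (hα : 0 ≤ α) (hε : 0 < ε) :
    ∃ φ : Ω → ℝ, Measurable φ ∧ (∀ ω, 0 ≤ φ ω) ∧ (∀ ω, φ ω ≤ 1) ∧ ∫ ω, φ ω ∂P ≤ α ∧
      ∫ ω, (1 - φ ω) ∂Q < tradeoff P Q α + ε := by
  by_contra! h
  linarith [le_tradeoff hα h]

theorem tradeoff_antitoneOn : AntitoneOn (tradeoff P Q) (Ici 0) := fun _ ha _ _ hab =>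
  le_tradeoff ha fun _ hφ h0 h1 hφa => tradeoff_le_integral hφ h0 h1 (hφa.trans hab)

theorem tradeoff_convexOn [IsFiniteMeasure P] [IsFiniteMeasure Q] :
    ConvexOn ℝ (Ici 0) (tradeoff P Q) := by
  refine ⟨convex_Ici 0, fun a ha b hb s t hs ht hst => le_of_forall_pos_le_add fun ε hε => ?_⟩
  obtain ⟨φ, hφ, hφ0, hφ1, hφa, hφε⟩ :=
    exists_integral_one_sub_lt_tradeoff_add (P := P) (Q := Q) ha hε
  obtain ⟨ψ, hψ, hψ0, hψ1, hψb, hψε⟩ :=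
    exists_integral_one_sub_lt_tradeoff_add (P := P) (Q := Q) hb hε
  have hφi {μ : Measure Ω} [IsFiniteMeasure μ] : Integrable φ μ :=
    integrable_of_nonneg_of_le_one hφ hφ0 hφ1
  have hψi {μ : Measure Ω} [IsFiniteMeasure μ] : Integrable ψ μ :=
    integrable_of_nonneg_of_le_one hψ hψ0 hψ1
  have hφ' : Integrable (fun ω => 1 - φ ω) Q := (integrable_const 1).sub hφi
  have hψ' : Integrable (fun ω => 1 - ψ ω) Q := (integrable_const 1).sub hψi
  have hmix : ∀ ω, 1 - (s * φ ω + t * ψ ω) = s * (1 - φ ω) + t * (1 - ψ ω) := fun ω => by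
    linear_combination (-1 : ℝ) * hst
  rw [smul_eq_mul, smul_eq_mul, smul_eq_mul, smul_eq_mul]
  calc tradeoff P Q (s * a + t * b) ≤ ∫ ω, (1 - (s * φ ω + t * ψ ω)) ∂Q := by
        refine tradeoff_le_integral ((hφ.const_mul s).add (hψ.const_mul t))
          (fun ω => add_nonneg (mul_nonneg hs (hφ0 ω)) (mul_nonneg ht (hψ0 ω))) (fun ω => ?_) ?_
        · linarith [mul_le_mul_of_nonneg_left (hφ1 ω) hs, mul_le_mul_of_nonneg_left (hψ1 ω) ht]
        · rw [integral_add (hφi.const_mul s) (hψi.const_mul t), integral_const_mul,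
            integral_const_mul]
          gcongr
    _ = s * ∫ ω, (1 - φ ω) ∂Q + t * ∫ ω, (1 - ψ ω) ∂Q := by
        simp_rw [hmix]
        rw [integral_add (hφ'.const_mul s) (hψ'.const_mul t), integral_const_mul,
          integral_const_mul]
    _ ≤ s * (tradeoff P Q a + ε) + t * (tradeoff P Q b + ε) :=
        add_le_add (mul_le_mul_of_nonneg_left hφε.le hs) (mul_le_mul_of_nonneg_left hψε.le ht)
    _ = s * tradeoff P Q a + t * tradeoff P Q b + ε := by linear_combination ε * hst

end Tradeoff

theorem le_tradeoff_comp {α β : Type*} [MeasurableSpace α] [MeasurableSpace β] {μ : Measure α}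
    [IsProbabilityMeasure μ] {κ η : Kernel α β} [IsMarkovKernel κ] [IsFiniteKernel η]
    {f : ℝ → ℝ} (hconv : ConvexOn ℝ (Ici 0) f) (hanti : AntitoneOn f (Ici 0))
    (h : ∀ a, ∀ t ∈ Icc (0 : ℝ) 1, f t ≤ tradeoff (κ a) (η a) t) {t : ℝ}
    (ht : t ∈ Icc (0 : ℝ) 1) :
    f t ≤ tradeoff (κ ∘ₘ μ) (η ∘ₘ μ) t := by
  refine le_tradeoff ht.1 fun φ hφ h0 h1 hφt => ?_
  have hφi {ν : Measure β} [IsFiniteMeasure ν] : Integrable φ ν :=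
    integrable_of_nonneg_of_le_one hφ h0 h1
  have hψi : Integrable (fun y => 1 - φ y) (η ∘ₘ μ) := (integrable_const 1).sub hφi
  set g := fun a => ∫ y, φ y ∂κ a
  have hg : ∀ a, g a ∈ Icc 0 1 := fun a =>
    (convex_Icc 0 1).integral_mem isClosed_Icc (ae_of_all _ fun y => ⟨h0 y, h1 y⟩) hφi
  have hgi : Integrable g μ :=
    Measure.integrable_integral_of_integrable_comp (hφi (ν := κ ∘ₘ μ))
  have hfgi : Integrable (fun a => f (g a)) μ :=
    (hanti.mono Icc_subset_Ici_self).integrable_comp hgi.aemeasurable (ae_of_all _ hg)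
  calc f t ≤ f (∫ a, g a ∂μ) := hanti (mem_Ici.2 (integral_nonneg fun a => (hg a).1)) ht.1
          (by rwa [← Measure.integral_comp hφi])
    _ ≤ ∫ a, f (g a) ∂μ :=
        hconv.map_integral_le_of_nonneg (ae_of_all _ fun a => (hg a).1) hgi hfgi
    _ ≤ ∫ a, ∫ y, (1 - φ y) ∂η a ∂μ :=
        integral_mono hfgi (Measure.integrable_integral_of_integrable_comp hψi) fun a =>
          (h a _ (hg a)).trans (tradeoff_le_integral hφ h0 h1 le_rfl)
    _ = ∫ y, (1 - φ y) ∂(η ∘ₘ μ) := (Measure.integral_comp hψi).symm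

/-- If an algorithm `A` is `f`-DP, with `f = T(P₀,P₁)` a trade-off function, then for every
probability measure `𝔻` on `X`, `A` is `f_{n,𝔻}`-WMIP. -/
theorem fdp_implies_wmip {X Y Z : Type*}
    [MeasurableSpace X] [MeasurableSpace Y] [MeasurableSpace Z]
    {n : ℕ} (hn : 0 < n)
    (P₀ P₁ : Measure Z) [IsProbabilityMeasure P₀] [IsProbabilityMeasure P₁]
    (A : Kernel (Fin n → X) Y) [IsMarkovKernel A]
    (h : fDP A (tradeoff P₀ P₁)) :
    ∀ 𝔻 : Measure X, IsProbabilityMeasure 𝔻 → WMIP hn A (tradeoff P₀ P₁) 𝔻 := by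
  intro 𝔻 _ x t ht
  let insertTarget : (Fin n → X) → Fin n → X := fun D => Function.update D ⟨0, hn⟩ x
  have hadj : ∀ D, Adjacent D (insertTarget D) := fun D =>
    ⟨⟨0, hn⟩, fun j hj => (Function.update_of_ne hj x D).symm⟩
  exact le_tradeoff_comp (μ := Measure.pi fun _ => 𝔻) (κ := A)
    (η := A.comap insertTarget measurable_update_left) tradeoff_convexOn tradeoff_antitoneOn
    (fun D s hs => h D _ (hadj D) s hs) ht
end

section
/- Let X be a measurable space, n ∈ ℕ, 𝔻 a probability measure on X, and f : [0,1] → [0,1]. If an algorithm A with output space Y is f_{n,𝔻}-WMIP and K is any Markov kernel from Y to a measurable space Z (independent of the dataset), then the post-processed algorithm D ↦ ∫ K(y) d(A(D))(y), i.e., the kernel composition K ∘ A, is also f_{n,𝔻}-WMIP. -/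
open MeasureTheory ProbabilityTheory
open scoped ProbabilityTheory NNReal ENNReal

/-!
Averaging a test `φ` on `Z` against a Markov kernel `K` gives a test `y ↦ ∫ φ d(K y)` on `Y`
with the same type I and type II errors for `(P, Q)` as `φ` has for `(K P, K Q)`. Hence every
error pair achievable after post-processing is already achievable before it, so
`T(K P, K Q) ≥ T(P, Q)`. Both `Pout` and `Pin` of `K ∘ₖ A` are the pushforwards by `K` of
those of `A`, so the WMIP bound transfers.
-/

structure IsTest {Ω : Type*} [MeasurableSpace Ω] (φ : Ω → ℝ) : Prop where
  measurable : Measurable φ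
  nonneg : ∀ ω, 0 ≤ φ ω
  le_one : ∀ ω, φ ω ≤ 1

namespace IsTest

variable {Ω Y : Type*} [MeasurableSpace Ω] [MeasurableSpace Y] {φ : Ω → ℝ}

lemma one_sub (hφ : IsTest φ) : IsTest fun ω => 1 - φ ω :=
  ⟨measurable_const.sub hφ.measurable, fun ω => sub_nonneg.2 (hφ.le_one ω),
    fun ω => sub_le_self 1 (hφ.nonneg ω)⟩

lemma integrable (hφ : IsTest φ) (μ : Measure Ω) [IsFiniteMeasure μ] : Integrable φ μ :=
  (integrable_const 1).mono' hφ.measurable.aestronglyMeasurable <| .of_forall fun ω => by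
    rw [Real.norm_eq_abs, abs_of_nonneg (hφ.nonneg ω)]
    exact hφ.le_one ω

lemma integral_one_sub (hφ : IsTest φ) (μ : Measure Ω) [IsProbabilityMeasure μ] :
    ∫ ω, (1 - φ ω) ∂μ = 1 - ∫ ω, φ ω ∂μ := by
  rw [integral_sub (integrable_const 1) (hφ.integrable μ), integral_const, probReal_univ,
    one_smul]

lemma kernel_average (hφ : IsTest φ) (K : Kernel Y Ω) [IsMarkovKernel K] :
    IsTest fun y => ∫ ω, φ ω ∂K y where
  measurable := (hφ.measurable.stronglyMeasurable.integral_kernel (κ := K)).measurable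
  nonneg _ := integral_nonneg hφ.nonneg
  le_one y := by
    simpa using integral_mono (hφ.integrable (K y)) (integrable_const 1) hφ.le_one

lemma integral_bind (hφ : IsTest φ) (μ : Measure Y) (K : Kernel Y Ω) [IsFiniteKernel K] :
    ∫ ω, φ ω ∂(μ.bind K) = ∫ y, ∫ ω, φ ω ∂K y ∂μ := by
  have hlin : ∀ ν : Measure Ω, ∫ ω, φ ω ∂ν = (∫⁻ ω, ENNReal.ofReal (φ ω) ∂ν).toReal :=
    fun ν => integral_eq_lintegral_of_nonneg_ae (.of_forall hφ.nonneg)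
      hφ.measurable.aestronglyMeasurable
  have hm := hφ.measurable.ennreal_ofReal
  simp_rw [hlin]
  rw [Measure.lintegral_bind K.aemeasurable hm.aemeasurable,
    integral_toReal hm.lintegral_kernel.aemeasurable]
  refine .of_forall fun y => lt_of_le_of_lt ?_ (measure_lt_top (K y) Set.univ)
  simpa using lintegral_mono fun ω => ENNReal.ofReal_le_one.2 (hφ.le_one ω)

end IsTest

lemma tradeoff_le_tradeoff_bind {Y Z : Type*} [MeasurableSpace Y] [MeasurableSpace Z]
    (P Q : Measure Y) (K : Kernel Y Z) [IsMarkovKernel K] {α : ℝ} (hα : 0 ≤ α) :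
    tradeoff P Q α ≤ tradeoff (P.bind K) (Q.bind K) α := by
  apply csInf_le_csInf
  · refine ⟨0, ?_⟩
    rintro r ⟨φ, -, -, h1, -, rfl⟩
    exact integral_nonneg fun ω => sub_nonneg.2 (h1 ω)
  · exact ⟨_, 0, measurable_const, fun _ => le_rfl, fun _ => zero_le_one, by simpa using hα, rfl⟩
  · rintro r ⟨φ, hm, h0, h1, hPφ, rfl⟩
    have hφ : IsTest φ := ⟨hm, h0, h1⟩
    have hψ := hφ.kernel_average K
    refine ⟨_, hψ.measurable, hψ.nonneg, hψ.le_one, (hφ.integral_bind P K).symm.trans_le hPφ, ?_⟩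
    rw [hφ.one_sub.integral_bind Q K]
    exact integral_congr_ae (.of_forall fun y => hφ.integral_one_sub (K y))

lemma bind_kernel_comp_eq_bind_bind {α β Y Z : Type*} [MeasurableSpace α] [MeasurableSpace β]
    [MeasurableSpace Y] [MeasurableSpace Z] (μ : Measure α) {g : α → β} (hg : Measurable g)
    (A : Kernel β Y) (K : Kernel Y Z) :
    μ.bind (fun a => (K ∘ₖ A) (g a)) = (μ.bind fun a => A (g a)).bind K := by
  simp_rw [Kernel.comp_apply]
  exact (Measure.bind_bind (A.measurable.comp hg).aemeasurable K.aemeasurable).symm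

section Postprocessing

variable {X Y Z : Type*} [MeasurableSpace X] [MeasurableSpace Y] [MeasurableSpace Z] {n : ℕ}

lemma Pout_kernel_comp (A : Kernel (Fin n → X) Y) (K : Kernel Y Z) (𝔻 : Measure X) :
    Pout (K ∘ₖ A) 𝔻 = (Pout A 𝔻).bind K :=
  bind_kernel_comp_eq_bind_bind _ measurable_id A K

lemma Pin_kernel_comp (hn : 0 < n) (x : X) (A : Kernel (Fin n → X) Y) (K : Kernel Y Z)
    (𝔻 : Measure X) : Pin hn x (K ∘ₖ A) 𝔻 = (Pin hn x A 𝔻).bind K :=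
  bind_kernel_comp_eq_bind_bind _ measurable_update_left A K

end Postprocessing

theorem wmip_postprocessing_general {X Y Z : Type*}
    [MeasurableSpace X] [MeasurableSpace Y] [MeasurableSpace Z]
    {n : ℕ} (hn : 0 < n) (𝔻 : Measure X)
    (f : ℝ → ℝ)
    (A : Kernel (Fin n → X) Y)
    (K : Kernel Y Z) [IsMarkovKernel K]
    (h : WMIP hn A f 𝔻) :
    WMIP hn (K ∘ₖ A) f 𝔻 := by
  intro x α hα
  rw [Pout_kernel_comp, Pin_kernel_comp]
  exact (h x α hα).trans (tradeoff_le_tradeoff_bind _ _ K hα.1)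

/-- Post-processing: if `A` is `f_{n,𝔻}`-WMIP and `K` is any Markov kernel from the output
space `Y` to `Z`, then the post-processed algorithm `K ∘ A` is also `f_{n,𝔻}`-WMIP. -/
theorem wmip_postprocessing {X Y Z : Type*}
    [MeasurableSpace X] [MeasurableSpace Y] [MeasurableSpace Z]
    {n : ℕ} (hn : 0 < n) (𝔻 : Measure X) [IsProbabilityMeasure 𝔻]
    (f : ℝ → ℝ)
    (A : Kernel (Fin n → X) Y) [IsMarkovKernel A]
    (K : Kernel Y Z) [IsMarkovKernel K]
    (h : WMIP hn A f 𝔻) :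
    WMIP hn (K ∘ₖ A) f 𝔻 :=
  wmip_postprocessing_general hn 𝔻 f A K h
end

section
/- Let X be a compact metric space equipped with its Borel σ-algebra, n ∈ ℕ, 𝔻 a probability measure on X, and A a Markov kernel from X^n to a measurable space Y such that the map D ↦ A(D) is continuous from X^n to probability measures on Y in total variation distance. Then for every α ∈ [0,1] there exists x* ∈ X such that for all x ∈ X, T(P_out(x, A, 𝔻, n), P_in(x, A, 𝔻, n))(α) ≥ T(P_out(x*, A, 𝔻, n), P_in(x*, A, 𝔻, n))(α); that is, the worst-case example for membership inference at level α exists. -/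
open MeasureTheory ProbabilityTheory
open scoped ProbabilityTheory NNReal ENNReal

/-- Total variation distance between two measures: `sup_S |μ(S) − ν(S)|` over measurable `S`. -/
noncomputable def tvDist {Y : Type*} [MeasurableSpace Y] (μ ν : Measure Y) : ℝ :=
  sSup { r : ℝ | ∃ S : Set Y, MeasurableSet S ∧ r = |(μ S).toReal - (ν S).toReal| }

/-!
For a fixed test `φ`, the type II error `∫ (1 - φ) dQ` moves by at most the total variation
distance when `Q` moves, so `Q ↦ T(P, Q)(α)` is 1-Lipschitz in total variation. On the compact
space `X^n`, Heine–Cantor makes `D ↦ A(D)` uniformly continuous in total variation, and averaging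
over the `n - 1` random records keeps the modulus, so `x ↦ P_in(x)` is continuous in total
variation. Hence `x ↦ T(P_out, P_in(x))(α)` is continuous on the compact space `X` and attains
its minimum.
-/

open Set

section TotalVariation

variable {Y : Type*} [MeasurableSpace Y] {μ ν ρ : Measure Y}

lemma tvDist_nonneg (μ ν : Measure Y) : 0 ≤ tvDist μ ν :=
  Real.sSup_nonneg <| by rintro _ ⟨S, -, rfl⟩; exact abs_nonneg _

lemma tvDist_comm (μ ν : Measure Y) : tvDist μ ν = tvDist ν μ := by
  simp only [tvDist, abs_sub_comm]

lemma tvDist_le {ε : ℝ} (h : ∀ S, MeasurableSet S → |μ.real S - ν.real S| ≤ ε) :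
    tvDist μ ν ≤ ε :=
  csSup_le ⟨_, ∅, .empty, rfl⟩ <| by rintro _ ⟨S, hS, rfl⟩; exact h S hS

lemma tvDist_self (μ : Measure Y) : tvDist μ μ = 0 :=
  le_antisymm (tvDist_le fun S _ => by simp) (tvDist_nonneg μ μ)

variable [IsFiniteMeasure μ] [IsFiniteMeasure ν] [IsFiniteMeasure ρ]

lemma abs_sub_le_tvDist {S : Set Y} (hS : MeasurableSet S) :
    |μ.real S - ν.real S| ≤ tvDist μ ν := by
  refine le_csSup ⟨μ.real univ + ν.real univ, ?_⟩ ⟨S, hS, rfl⟩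
  rintro _ ⟨T, -, rfl⟩
  calc |μ.real T - ν.real T| ≤ |μ.real T| + |ν.real T| := abs_sub _ _
    _ ≤ μ.real univ + ν.real univ := by
      rw [abs_of_nonneg measureReal_nonneg, abs_of_nonneg measureReal_nonneg]
      exact add_le_add (measureReal_mono (subset_univ T)) (measureReal_mono (subset_univ T))

lemma tvDist_triangle : tvDist μ ρ ≤ tvDist μ ν + tvDist ν ρ :=
  tvDist_le fun _ hS => (abs_sub_le _ _ _).trans <|
    add_le_add (abs_sub_le_tvDist hS) (abs_sub_le_tvDist hS)

lemma abs_tvDist_sub_tvDist_le {μ' ν' : Measure Y} [IsFiniteMeasure μ'] [IsFiniteMeasure ν'] :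
    |tvDist μ ν - tvDist μ' ν'| ≤ tvDist μ μ' + tvDist ν ν' := by
  rw [abs_sub_le_iff]
  constructor
  · linarith [tvDist_triangle (μ := μ) (ν := μ') (ρ := ν),
      tvDist_triangle (μ := μ') (ν := ν') (ρ := ν), tvDist_comm ν' ν]
  · linarith [tvDist_triangle (μ := μ') (ν := μ) (ρ := ν'),
      tvDist_triangle (μ := μ) (ν := ν) (ρ := ν'), tvDist_comm μ' μ]

/-- The layer-cake formula reduces the integral of a `[0,1]`-valued function to the measures of
its superlevel sets, each of which moves by at most the total variation distance. -/
lemma integral_le_integral_add_tvDist {φ : Y → ℝ} (hφ : Measurable φ) (h0 : ∀ y, 0 ≤ φ y)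
    (h1 : ∀ y, φ y ≤ 1) : ∫ y, φ y ∂ν ≤ ∫ y, φ y ∂μ + tvDist μ ν := by
  have layer_cake (ρ : Measure Y) [IsFiniteMeasure ρ] :
      ∫ y, φ y ∂ρ = ∫ t in (0 : ℝ)..1, ρ.real {y | t ≤ φ y} := by
    have hint : Integrable φ ρ := .of_bound hφ.aestronglyMeasurable 1 <| ae_of_all _ fun y => by
      rw [Real.norm_of_nonneg (h0 y)]; exact h1 y
    rw [hint.integral_eq_integral_Ioc_meas_le (ae_of_all _ h0) (ae_of_all _ h1),
      intervalIntegral.integral_of_le zero_le_one]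
  have antitone_level (ρ : Measure Y) [IsFiniteMeasure ρ] :
      Antitone fun t : ℝ => ρ.real {y | t ≤ φ y} :=
    fun s t hst => measureReal_mono fun y hy => hst.trans hy
  rw [layer_cake μ, layer_cake ν]
  calc ∫ t in (0 : ℝ)..1, ν.real {y | t ≤ φ y}
      ≤ ∫ t in (0 : ℝ)..1, (μ.real {y | t ≤ φ y} + tvDist μ ν) := by
        refine intervalIntegral.integral_mono_on zero_le_one (antitone_level ν).intervalIntegrable
          ((antitone_level μ).intervalIntegrable.add intervalIntegrable_const) fun t _ => ?_
        have := abs_sub_le_tvDist (μ := μ) (ν := ν) (S := {y | t ≤ φ y})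
          (measurableSet_le measurable_const hφ)
        linarith [neg_abs_le (μ.real {y | t ≤ φ y} - ν.real {y | t ≤ φ y})]
    _ = (∫ t in (0 : ℝ)..1, μ.real {y | t ≤ φ y}) + tvDist μ ν := by
        rw [intervalIntegral.integral_add (antitone_level μ).intervalIntegrable
          intervalIntegrable_const, intervalIntegral.integral_const, sub_zero, one_smul]

lemma tradeoff_le_tradeoff_add_tvDist (P : Measure Y) {α : ℝ} (hα : 0 ≤ α) :
    tradeoff P ν α ≤ tradeoff P μ α + tvDist μ ν := by
  rw [← sub_le_iff_le_add]
  refine le_csInf ⟨_, 0, measurable_const, fun _ => le_rfl, fun _ => zero_le_one,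
    by simpa using hα, rfl⟩ ?_
  rintro _ ⟨φ, hφ, h0, h1, hP, rfl⟩
  rw [sub_le_iff_le_add]
  have bdd : BddBelow {r : ℝ | ∃ φ : Y → ℝ, Measurable φ ∧ (∀ ω, 0 ≤ φ ω) ∧ (∀ ω, φ ω ≤ 1) ∧
      (∫ ω, φ ω ∂P) ≤ α ∧ r = ∫ ω, (1 - φ ω) ∂ν} := by
    refine ⟨0, ?_⟩
    rintro _ ⟨ψ, -, -, hψ, -, rfl⟩
    exact integral_nonneg fun ω => sub_nonneg.2 (hψ ω)
  calc tradeoff P ν α ≤ ∫ ω, (1 - φ ω) ∂ν := csInf_le bdd ⟨φ, hφ, h0, h1, hP, rfl⟩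
    _ ≤ ∫ ω, (1 - φ ω) ∂μ + tvDist μ ν :=
        integral_le_integral_add_tvDist (measurable_const.sub hφ)
          (fun ω => sub_nonneg.2 (h1 ω)) (fun ω => sub_le_self _ (h0 ω))

lemma abs_tradeoff_sub_tradeoff_le (P : Measure Y) {α : ℝ} (hα : 0 ≤ α) :
    |tradeoff P μ α - tradeoff P ν α| ≤ tvDist μ ν := by
  rw [abs_sub_le_iff]
  constructor <;> linarith [tradeoff_le_tradeoff_add_tvDist (μ := μ) (ν := ν) P hα,
    tradeoff_le_tradeoff_add_tvDist (μ := ν) (ν := μ) P hα, tvDist_comm ν μ]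

end TotalVariation

section KernelComposition

variable {Z Y : Type*} [MeasurableSpace Z] [MeasurableSpace Y]

lemma measureReal_comp_eq_integral (κ : Kernel Z Y) [IsFiniteKernel κ] (π : Measure Z)
    {S : Set Y} (hS : MeasurableSet S) : (κ ∘ₘ π).real S = ∫ z, (κ z).real S ∂π := by
  rw [measureReal_def, Measure.bind_apply hS κ.aemeasurable]
  exact (integral_toReal (κ.measurable_coe hS).aemeasurable
    (ae_of_all _ fun z => measure_lt_top _ _)).symm

lemma tvDist_comp_le (κ η : Kernel Z Y) [IsFiniteKernel κ] [IsFiniteKernel η]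
    (π : Measure Z) [IsProbabilityMeasure π] {ε : ℝ} (h : ∀ z, tvDist (κ z) (η z) ≤ ε) :
    tvDist (κ ∘ₘ π) (η ∘ₘ π) ≤ ε := by
  refine tvDist_le fun S hS => ?_
  have hκ := Kernel.IsFiniteKernel.integrable π κ hS
  have hη := Kernel.IsFiniteKernel.integrable π η hS
  rw [measureReal_comp_eq_integral κ π hS, measureReal_comp_eq_integral η π hS,
    ← integral_sub hκ hη]
  calc |∫ z, ((κ z).real S - (η z).real S) ∂π|
      ≤ ∫ z, |(κ z).real S - (η z).real S| ∂π := abs_integral_le_integral_abs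
    _ ≤ ∫ _, ε ∂π := integral_mono (hκ.sub hη).abs (integrable_const ε)
        fun z => (abs_sub_le_tvDist hS).trans (h z)
    _ = ε := by simp

end KernelComposition

section UniformContinuity

variable {Z Y : Type*} [PseudoMetricSpace Z] [MeasurableSpace Y]
  (Q : Z → Measure Y) [∀ z, IsFiniteMeasure (Q z)]

lemma continuous_tvDist_of_forall_dist_lt
    (hQ : ∀ z, ∀ ε > (0 : ℝ), ∃ δ > (0 : ℝ), ∀ z', dist z z' < δ → tvDist (Q z) (Q z') < ε) :
    Continuous fun p : Z × Z => tvDist (Q p.1) (Q p.2) := by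
  refine Metric.continuous_iff.2 fun p ε hε => ?_
  obtain ⟨δ₁, hδ₁, h₁⟩ := hQ p.1 (ε / 2) (half_pos hε)
  obtain ⟨δ₂, hδ₂, h₂⟩ := hQ p.2 (ε / 2) (half_pos hε)
  refine ⟨min δ₁ δ₂, lt_min hδ₁ hδ₂, fun q hq => ?_⟩
  rw [Prod.dist_eq, max_lt_iff, lt_min_iff, lt_min_iff] at hq
  have hq₁ := h₁ q.1 (dist_comm q.1 p.1 ▸ hq.1.1)
  have hq₂ := h₂ q.2 (dist_comm q.2 p.2 ▸ hq.2.2)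
  rw [tvDist_comm] at hq₁ hq₂
  calc dist (tvDist (Q q.1) (Q q.2)) (tvDist (Q p.1) (Q p.2))
      ≤ tvDist (Q q.1) (Q p.1) + tvDist (Q q.2) (Q p.2) := abs_tvDist_sub_tvDist_le
    _ < ε := by linarith

/-- Heine–Cantor, applied to the continuous function `(z, z') ↦ tvDist (Q z) (Q z')` on the
compact space `Z × Z`, which vanishes on the diagonal. -/
lemma exists_pos_forall_dist_lt_tvDist_lt [CompactSpace Z]
    (hQ : ∀ z, ∀ ε > (0 : ℝ), ∃ δ > (0 : ℝ), ∀ z', dist z z' < δ → tvDist (Q z) (Q z') < ε) :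
    ∀ ε > (0 : ℝ), ∃ δ > (0 : ℝ), ∀ z z', dist z z' < δ → tvDist (Q z) (Q z') < ε := by
  intro ε hε
  obtain ⟨δ, hδ, h⟩ := Metric.uniformContinuous_iff.1
    (CompactSpace.uniformContinuous_of_continuous (continuous_tvDist_of_forall_dist_lt Q hQ)) ε hε
  refine ⟨δ, hδ, fun z z' hzz' => ?_⟩
  have := @h (z, z) (z, z') (by simpa [Prod.dist_eq] using hzz')
  rwa [tvDist_self, Real.dist_eq, zero_sub, abs_neg, abs_of_nonneg (tvDist_nonneg _ _)] at this

end UniformContinuity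

section MembershipInference

variable {X Y : Type*} [MeasurableSpace X] [MeasurableSpace Y] {n : ℕ}
  (hn : 0 < n) (𝔻 : Measure X) (A : Kernel (Fin n → X) Y)

lemma Pin_eq_comp (x : X) :
    Pin hn x A 𝔻 = A.comap (Function.update · ⟨0, hn⟩ x) measurable_update_left ∘ₘ
      Measure.pi fun _ : Fin n => 𝔻 :=
  rfl

instance [IsProbabilityMeasure 𝔻] [IsMarkovKernel A] (x : X) :
    IsProbabilityMeasure (Pin hn x A 𝔻) := by
  rw [Pin_eq_comp]; infer_instance

variable [PseudoMetricSpace X] [IsProbabilityMeasure 𝔻] [IsMarkovKernel A]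

lemma tvDist_Pin_le {δ ε : ℝ} (hA : ∀ D D', dist D D' < δ → tvDist (A D) (A D') ≤ ε)
    {x x₀ : X} (hx : dist x x₀ < δ) : tvDist (Pin hn x A 𝔻) (Pin hn x₀ A 𝔻) ≤ ε := by
  have dist_update_le (D : Fin n → X) :
      dist (Function.update D ⟨0, hn⟩ x) (Function.update D ⟨0, hn⟩ x₀) ≤ dist x x₀ := by
    refine (dist_pi_le_iff dist_nonneg).2 fun j => ?_
    rcases eq_or_ne j ⟨0, hn⟩ with rfl | hj
    · simp
    · simp [Function.update_of_ne hj]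
  rw [Pin_eq_comp, Pin_eq_comp]
  exact tvDist_comp_le _ _ _ fun D => hA _ _ ((dist_update_le D).trans_lt hx)

lemma continuous_tradeoff_Pin [CompactSpace X]
    (hA : ∀ D : Fin n → X, ∀ ε > (0 : ℝ), ∃ δ > (0 : ℝ),
      ∀ D' : Fin n → X, dist D D' < δ → tvDist (A D) (A D') < ε)
    (P : Measure Y) {α : ℝ} (hα : 0 ≤ α) :
    Continuous fun x => tradeoff P (Pin hn x A 𝔻) α := by
  refine Metric.continuous_iff.2 fun x₀ ε hε => ?_
  obtain ⟨δ, hδ, hAδ⟩ := exists_pos_forall_dist_lt_tvDist_lt A hA (ε / 2) (half_pos hε)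
  refine ⟨δ, hδ, fun x hx => ?_⟩
  calc dist (tradeoff P (Pin hn x A 𝔻) α) (tradeoff P (Pin hn x₀ A 𝔻) α)
      ≤ tvDist (Pin hn x A 𝔻) (Pin hn x₀ A 𝔻) := abs_tradeoff_sub_tradeoff_le P hα
    _ ≤ ε / 2 := tvDist_Pin_le hn 𝔻 A (fun D D' h => (hAδ D D' h).le) hx
    _ < ε := half_lt_self hε

end MembershipInference

theorem worst_case_example_exists_general {X Y : Type*}
    [MetricSpace X] [CompactSpace X] [MeasurableSpace X]
    [MeasurableSpace Y]
    {n : ℕ} (hn : 0 < n) (𝔻 : Measure X) [IsProbabilityMeasure 𝔻]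
    (A : Kernel (Fin n → X) Y) [IsMarkovKernel A]
    (hcont : ∀ D : Fin n → X, ∀ ε > (0 : ℝ), ∃ δ > (0 : ℝ),
      ∀ D' : Fin n → X, dist D D' < δ → tvDist (A D) (A D') < ε) :
    ∀ α ∈ Set.Icc (0 : ℝ) 1, ∃ xstar : X, ∀ x : X,
      tradeoff (Pout A 𝔻) (Pin hn xstar A 𝔻) α ≤ tradeoff (Pout A 𝔻) (Pin hn x A 𝔻) α := by
  intro α hα
  have : Nonempty X := nonempty_of_isProbabilityMeasure 𝔻
  obtain ⟨xstar, -, hmin⟩ := isCompact_univ.exists_isMinOn univ_nonempty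
    (continuous_tradeoff_Pin hn 𝔻 A hcont (Pout A 𝔻) hα.1).continuousOn
  exact ⟨xstar, fun x => hmin (mem_univ x)⟩

/-- Existence of the worst-case example: if `X` is a compact metric space with its Borel
σ-algebra and `D ↦ A(D)` is continuous in total variation distance, then for every
`α ∈ [0,1]` there is a worst-case record `x*` minimising the membership-inference
trade-off `T(Pout, Pin x)(α)` over `x ∈ X`. -/
theorem worst_case_example_exists {X Y : Type*}
    [MetricSpace X] [CompactSpace X] [MeasurableSpace X] [BorelSpace X]
    [MeasurableSpace Y]
    {n : ℕ} (hn : 0 < n) (𝔻 : Measure X) [IsProbabilityMeasure 𝔻]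
    (A : Kernel (Fin n → X) Y) [IsMarkovKernel A]
    (hcont : ∀ D : Fin n → X, ∀ ε > (0 : ℝ), ∃ δ > (0 : ℝ),
      ∀ D' : Fin n → X, dist D D' < δ → tvDist (A D) (A D') < ε) :
    ∀ α ∈ Set.Icc (0 : ℝ) 1, ∃ xstar : X, ∀ x : X,
      tradeoff (Pout A 𝔻) (Pin hn xstar A 𝔻) α ≤ tradeoff (Pout A 𝔻) (Pin hn x A 𝔻) α :=
  worst_case_example_exists_general hn 𝔻 A hcont
end

section
/- For all μ, ν ≥ 0, the tensor product of the Gaussian trade-off functions G_μ and G_ν is again a Gaussian trade-off function: T(N(0,1) × N(0,1), N(μ,1) × N(ν,1))(α) = G_{√(μ²+ν²)}(α) for all α ∈ [0,1], where × denotes the product of probability measures on ℝ × ℝ. -/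
open MeasureTheory ProbabilityTheory
open scoped ProbabilityTheory NNReal ENNReal

/-- The Gaussian trade-off function `G_μ = T(N(0,1), N(μ,1))`. -/
noncomputable def Gtrade (μ : ℝ) : ℝ → ℝ :=
  tradeoff (gaussianReal 0 1) (gaussianReal μ 1)

/-!
The log-likelihood ratio of `N(μ,1) × N(ν,1)` against `N(0,1) × N(0,1)` only depends on
`μ x + ν y`. A rotation of the plane taking `(√(μ²+ν²), 0)` to `(μ, ν)` fixes the standard
Gaussian and maps `N(√(μ²+ν²),1) × N(0,1)` to `N(μ,1) × N(ν,1)`; trade-off functions are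
invariant under measurable bijections, and an independent `N(0,1)` coordinate shared by both
hypotheses carries no information, since averaging a test over it yields a test on the first
coordinate with the same errors.
-/

section Tradeoff

variable {Ω Ω' : Type*} [MeasurableSpace Ω] [MeasurableSpace Ω']

def IsTest_s8 (φ : Ω → ℝ) : Prop :=
  Measurable φ ∧ (∀ ω, 0 ≤ φ ω) ∧ ∀ ω, φ ω ≤ 1

lemma IsTest_s8.comp {φ : Ω' → ℝ} (hφ : IsTest_s8 φ) {f : Ω → Ω'} (hf : Measurable f) :
    IsTest_s8 (φ ∘ f) :=
  ⟨hφ.1.comp hf, fun ω => hφ.2.1 (f ω), fun ω => hφ.2.2 (f ω)⟩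

lemma IsTest_s8.integrable {φ : Ω → ℝ} (hφ : IsTest_s8 φ) (P : Measure Ω) [IsFiniteMeasure P] :
    Integrable φ P :=
  .of_bound hφ.1.aestronglyMeasurable 1 <| .of_forall fun ω => by
    rw [Real.norm_eq_abs, abs_le]
    exact ⟨by linarith [hφ.2.1 ω], hφ.2.2 ω⟩

lemma IsTest_s8.integral_prod_right {φ : Ω × Ω' → ℝ} (hφ : IsTest_s8 φ) (ν : Measure Ω')
    [IsProbabilityMeasure ν] : IsTest_s8 (fun x => ∫ z, φ (x, z) ∂ν) := by
  refine ⟨hφ.1.stronglyMeasurable.integral_prod_right'.measurable,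
    fun x => integral_nonneg fun z => hφ.2.1 _, fun x => ?_⟩
  calc ∫ z, φ (x, z) ∂ν ≤ ∫ _, 1 ∂ν :=
        integral_mono ((hφ.comp measurable_prodMk_left).integrable ν) (integrable_const 1)
          fun z => hφ.2.2 _
    _ = 1 := by simp

theorem tradeoff_eq_of_forall_exists_test {P Q : Measure Ω} {P' Q' : Measure Ω'}
    (h : ∀ φ, IsTest_s8 φ → ∃ ψ, IsTest_s8 ψ ∧ ∫ ω, ψ ω ∂P' ≤ ∫ ω, φ ω ∂P ∧
      ∫ ω, (1 - ψ ω) ∂Q' = ∫ ω, (1 - φ ω) ∂Q)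
    (h' : ∀ ψ, IsTest_s8 ψ → ∃ φ, IsTest_s8 φ ∧ ∫ ω, φ ω ∂P ≤ ∫ ω, ψ ω ∂P' ∧
      ∫ ω, (1 - φ ω) ∂Q = ∫ ω, (1 - ψ ω) ∂Q')
    (α : ℝ) : tradeoff P Q α = tradeoff P' Q' α := by
  unfold tradeoff
  congr 1
  ext r
  constructor
  · rintro ⟨φ, hφm, hφ0, hφ1, hφα, rfl⟩
    obtain ⟨ψ, ⟨hψm, hψ0, hψ1⟩, hψα, hψr⟩ := h φ ⟨hφm, hφ0, hφ1⟩
    exact ⟨ψ, hψm, hψ0, hψ1, hψα.trans hφα, hψr.symm⟩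
  · rintro ⟨ψ, hψm, hψ0, hψ1, hψα, rfl⟩
    obtain ⟨φ, ⟨hφm, hφ0, hφ1⟩, hφα, hφr⟩ := h' ψ ⟨hψm, hψ0, hψ1⟩
    exact ⟨φ, hφm, hφ0, hφ1, hφα.trans hψα, hφr.symm⟩

theorem tradeoff_map_measurableEquiv (e : Ω ≃ᵐ Ω') (P Q : Measure Ω) (α : ℝ) :
    tradeoff (P.map e) (Q.map e) α = tradeoff P Q α := by
  refine tradeoff_eq_of_forall_exists_test (fun φ hφ => ⟨φ ∘ e, hφ.comp e.measurable, ?_⟩)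
    (fun ψ hψ => ⟨ψ ∘ e.symm, hψ.comp e.symm.measurable, ?_⟩) α
  · simp only [integral_map_equiv, Function.comp_apply, le_refl, and_self]
  · simp only [integral_map_equiv, Function.comp_apply, MeasurableEquiv.symm_apply_apply,
      le_refl, and_self]

theorem tradeoff_prod_right (P Q : Measure Ω) [IsFiniteMeasure P] [IsFiniteMeasure Q]
    (ν : Measure Ω') [IsProbabilityMeasure ν] (α : ℝ) :
    tradeoff (P.prod ν) (Q.prod ν) α = tradeoff P Q α := by
  refine tradeoff_eq_of_forall_exists_test (fun φ hφ => ?_)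
    (fun ψ hψ => ⟨ψ ∘ Prod.fst, hψ.comp measurable_fst, ?_⟩) α
  · refine ⟨_, hφ.integral_prod_right ν, ?_, ?_⟩
    · rw [integral_prod _ (hφ.integrable _)]
    · rw [integral_prod (fun ω => 1 - φ ω) ((integrable_const 1).sub (hφ.integrable _))]
      refine integral_congr_ae (.of_forall fun x => ?_)
      have hφx : Integrable (fun z => φ (x, z)) ν :=
        (hφ.comp measurable_prodMk_left).integrable ν
      simp [integral_sub (integrable_const 1) hφx]
  · simp [integral_fun_fst (fun x => 1 - ψ x), integral_fun_fst ψ]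

end Tradeoff

lemma MeasureTheory.MeasurePreserving.map_withDensity {X Y : Type*} [MeasurableSpace X]
    [MeasurableSpace Y]
    {μ : Measure X} {ν : Measure Y} {e : X ≃ᵐ Y} (he : MeasurePreserving e μ ν)
    {f : X → ℝ≥0∞} (hf : Measurable f) :
    (μ.withDensity f).map e = ν.withDensity (f ∘ e.symm) := by
  ext s hs
  rw [Measure.map_apply e.measurable hs, withDensity_apply _ (e.measurable hs),
    withDensity_apply _ hs, ← he.map_eq,
    setLIntegral_map hs (hf.comp e.symm.measurable) e.measurable]
  simp

lemma gaussianReal_prod_eq_withDensity (m m' : ℝ) :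
    (gaussianReal m 1).prod (gaussianReal m' 1)
      = (volume : Measure (ℝ × ℝ)).withDensity
          (fun p => gaussianPDF m 1 p.1 * gaussianPDF m' 1 p.2) := by
  refine Measure.prod_eq fun s t hs ht => ?_
  rw [withDensity_apply _ (hs.prod ht), Measure.volume_eq_prod, ← Measure.prod_restrict,
    lintegral_prod_mul (measurable_gaussianPDF m 1).aemeasurable
      (measurable_gaussianPDF m' 1).aemeasurable,
    gaussianReal_apply _ one_ne_zero, gaussianReal_apply _ one_ne_zero]

section Rotation

variable {a b : ℝ}

noncomputable def planeRotation (hab : a ^ 2 + b ^ 2 = 1) : (ℝ × ℝ) ≃ᵐ (ℝ × ℝ) where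
  toFun p := (a * p.1 - b * p.2, b * p.1 + a * p.2)
  invFun p := (a * p.1 + b * p.2, -b * p.1 + a * p.2)
  left_inv p := by
    ext
    · linear_combination p.1 * hab
    · linear_combination p.2 * hab
  right_inv p := by
    ext
    · linear_combination p.1 * hab
    · linear_combination p.2 * hab
  measurable_toFun := by dsimp only [Equiv.coe_fn_mk]; fun_prop
  measurable_invFun := by dsimp only [Equiv.coe_fn_symm_mk]; fun_prop

lemma planeRotation_apply (hab : a ^ 2 + b ^ 2 = 1) (p : ℝ × ℝ) :
    planeRotation hab p = (a * p.1 - b * p.2, b * p.1 + a * p.2) := rfl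

lemma planeRotation_symm_apply (hab : a ^ 2 + b ^ 2 = 1) (p : ℝ × ℝ) :
    (planeRotation hab).symm p = (a * p.1 + b * p.2, -b * p.1 + a * p.2) := rfl

lemma measurePreserving_planeRotation (hab : a ^ 2 + b ^ 2 = 1) :
    MeasurePreserving (planeRotation hab) volume volume := by
  let L : (ℝ × ℝ) →ₗ[ℝ] (ℝ × ℝ) :=
    (a • LinearMap.fst ℝ ℝ ℝ - b • LinearMap.snd ℝ ℝ ℝ).prod
      (b • LinearMap.fst ℝ ℝ ℝ + a • LinearMap.snd ℝ ℝ ℝ)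
  have hL : ⇑L = planeRotation hab := by
    ext p <;> simp [L, planeRotation_apply]
  have hdet : LinearMap.det L = 1 := by
    rw [← LinearMap.det_toMatrix (Module.Basis.finTwoProd ℝ), Matrix.det_fin_two, ← hab]
    simp [LinearMap.toMatrix_apply, L, Module.Basis.finTwoProd, sq]
  refine ⟨(planeRotation hab).measurable, ?_⟩
  rw [← hL, Measure.map_linearMap_addHaar_eq_smul_addHaar _ (by rw [hdet]; exact one_ne_zero),
    hdet]
  simp

lemma gaussianPDFReal_mul_gaussianPDFReal_of_sq_add_sq_eq_one (hab : a ^ 2 + b ^ 2 = 1)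
    (c x y : ℝ) :
    gaussianPDFReal c 1 (a * x + b * y) * gaussianPDFReal 0 1 (-b * x + a * y)
      = gaussianPDFReal (a * c) 1 x * gaussianPDFReal (b * c) 1 y := by
  simp only [gaussianPDFReal, NNReal.coe_one, mul_one, mul_mul_mul_comm _ (Real.exp _),
    ← Real.exp_add]
  congr 2
  -- `(a x + b y - c)² + (-b x + a y)² = (x - a c)² + (y - b c)²` on the unit circle
  linear_combination ((c ^ 2 - x ^ 2 - y ^ 2) / 2) * hab

theorem gaussianReal_prod_map_planeRotation (hab : a ^ 2 + b ^ 2 = 1) (c : ℝ) :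
    ((gaussianReal c 1).prod (gaussianReal 0 1)).map (planeRotation hab)
      = (gaussianReal (a * c) 1).prod (gaussianReal (b * c) 1) := by
  rw [gaussianReal_prod_eq_withDensity, gaussianReal_prod_eq_withDensity,
    (measurePreserving_planeRotation hab).map_withDensity (by fun_prop)]
  congr 1
  ext p
  simp only [Function.comp_apply, planeRotation_symm_apply, gaussianPDF,
    ← ENNReal.ofReal_mul (gaussianPDFReal_nonneg _ _ _),
    gaussianPDFReal_mul_gaussianPDFReal_of_sq_add_sq_eq_one hab]

end Rotation

lemma exists_sq_add_sq_eq_one_and_mul_sqrt_eq (μ ν : ℝ) :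
    ∃ a b : ℝ, a ^ 2 + b ^ 2 = 1 ∧
      a * Real.sqrt (μ ^ 2 + ν ^ 2) = μ ∧ b * Real.sqrt (μ ^ 2 + ν ^ 2) = ν := by
  set c := Real.sqrt (μ ^ 2 + ν ^ 2)
  have hc : c ^ 2 = μ ^ 2 + ν ^ 2 := Real.sq_sqrt (by positivity)
  rcases eq_or_ne c 0 with h | h
  · have hμ : μ = 0 := by nlinarith
    have hν : ν = 0 := by nlinarith
    exact ⟨1, 0, by norm_num, by simp [h, hμ], by simp [h, hν]⟩
  · refine ⟨μ / c, ν / c, ?_, div_mul_cancel₀ μ h, div_mul_cancel₀ ν h⟩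
    field_simp
    linarith

theorem gaussian_tradeoff_tensor_general (μ ν : ℝ) :
    ∀ α ∈ Set.Icc (0 : ℝ) 1,
      tradeoff ((gaussianReal 0 1).prod (gaussianReal 0 1))
        ((gaussianReal μ 1).prod (gaussianReal ν 1)) α
        = Gtrade (Real.sqrt (μ ^ 2 + ν ^ 2)) α := by
  intro α _
  obtain ⟨a, b, hab, hμ, hν⟩ := exists_sq_add_sq_eq_one_and_mul_sqrt_eq μ ν
  set c := Real.sqrt (μ ^ 2 + ν ^ 2)
  set N := fun m : ℝ => gaussianReal m 1
  have hnull : ((N 0).prod (N 0)).map (planeRotation hab) = (N 0).prod (N 0) := by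
    simpa using gaussianReal_prod_map_planeRotation hab 0
  calc tradeoff ((N 0).prod (N 0)) ((N μ).prod (N ν)) α
      = tradeoff (((N 0).prod (N 0)).map (planeRotation hab))
          (((N c).prod (N 0)).map (planeRotation hab)) α := by
        rw [hnull, gaussianReal_prod_map_planeRotation, hμ, hν]
    _ = tradeoff ((N 0).prod (N 0)) ((N c).prod (N 0)) α := tradeoff_map_measurableEquiv ..
    _ = Gtrade c α := tradeoff_prod_right ..

/-- The tensor product of Gaussian trade-off functions is Gaussian:
`T(N(0,1) × N(0,1), N(μ,1) × N(ν,1)) = G_{√(μ²+ν²)}` on `[0,1]`. -/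
theorem gaussian_tradeoff_tensor (μ ν : ℝ) (hμ : 0 ≤ μ) (hν : 0 ≤ ν) :
    ∀ α ∈ Set.Icc (0 : ℝ) 1,
      tradeoff ((gaussianReal 0 1).prod (gaussianReal 0 1))
        ((gaussianReal μ 1).prod (gaussianReal ν 1)) α
        = Gtrade (Real.sqrt (μ ^ 2 + ν ^ 2)) α :=
  gaussian_tradeoff_tensor_general μ ν
end

section
/- Let Δ, σ > 0, ε ≥ 0, and let P = N(0, σ²) and Q = N(Δ, σ²) be Gaussian measures on ℝ. If δ ≥ Φ(Δ/(2σ) − εσ/Δ) − e^ε Φ(−Δ/(2σ) − εσ/Δ), where Φ is the cumulative distribution function of N(0,1), then for every measurable set S ⊆ ℝ both P(S) ≤ e^ε Q(S) + δ and Q(S) ≤ e^ε P(S) + δ hold; consequently a one-dimensional Gaussian mechanism D ↦ N(q(D), σ²) for a query q with |q(D) − q(D′)| ≤ Δ on adjacent datasets is (ε,δ)-differentially private. -/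
/-!
By Neyman–Pearson, `P S - e^ε Q S` is largest on the likelihood-ratio set `{e^ε dQ ≤ dP}`. For
`P = N(u,1)`, `Q = N(0,1)` with `u > 0` that set is the half-line `[u/2 + ε/u, ∞)`, which gives the
explicit bound `gaussianHockeyStick ε u`; an affine change of variables reduces two Gaussians of
variance `σ²` and mean gap `d` to this case with `u = d/σ`. The derivative of
`u ↦ gaussianHockeyStick ε u` is a Gaussian density, so the bound only grows from `u = d/σ` to
`u = Δ/σ`.
-/

open MeasureTheory ProbabilityTheory
open scoped ProbabilityTheory NNReal ENNReal

open Set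

/-- Neyman–Pearson: among measurable sets, `S ↦ P S - c * Q S` is maximised by the likelihood-ratio
set `{c * dQ ≤ dP}`; stated additively to avoid truncated subtraction in `ℝ≥0∞`. -/
theorem withDensity_add_mul_le {α : Type*} [MeasurableSpace α] {μ : Measure α}
    {f g : α → ℝ≥0∞} (hf : Measurable f) (hg : Measurable g) (c : ℝ≥0∞)
    {S : Set α} (hS : MeasurableSet S) :
    μ.withDensity f S + c * μ.withDensity g {x | c * g x ≤ f x}
      ≤ c * μ.withDensity g S + μ.withDensity f {x | c * g x ≤ f x} := by
  set E := {x | c * g x ≤ f x}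
  set P := μ.withDensity f
  set Q := μ.withDensity g
  have hE : MeasurableSet E := measurableSet_le (hg.const_mul c) hf
  have hSE : P (S \ E) ≤ c * Q (S \ E) := by
    rw [withDensity_apply _ (hS.diff hE), withDensity_apply _ (hS.diff hE),
      ← lintegral_const_mul c hg]
    exact setLIntegral_mono' (hS.diff hE) fun x hx => (not_le.mp hx.2).le
  have hES : c * Q (E \ S) ≤ P (E \ S) := by
    rw [withDensity_apply _ (hE.diff hS), withDensity_apply _ (hE.diff hS),
      ← lintegral_const_mul c hg]
    exact setLIntegral_mono' (hE.diff hS) fun x hx => hx.1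
  calc P S + c * Q E = P (S ∩ E) + P (S \ E) + (c * Q (S ∩ E) + c * Q (E \ S)) := by
        rw [measure_inter_add_sdiff S hE, ← mul_add, inter_comm, measure_inter_add_sdiff E hS]
    _ ≤ P (S ∩ E) + c * Q (S \ E) + (c * Q (S ∩ E) + P (E \ S)) := by gcongr
    _ = c * Q S + P E := by
        rw [← measure_inter_add_sdiff S hE (μ := Q), ← measure_inter_add_sdiff E hS (μ := P),
          inter_comm E S]
        ring

local notation "Φ" => cdf (gaussianReal 0 1)

lemma gaussianReal_one_Ici (m t : ℝ) : gaussianReal m 1 (Ici t) = ENNReal.ofReal (Φ (m - t)) := by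
  have h := gaussianReal_map_const_sub (μ := 0) (v := 1) m
  rw [sub_zero] at h
  rw [← h, Measure.map_apply (by fun_prop) measurableSet_Ici, ofReal_cdf]
  congr 1
  ext x
  simp

lemma exp_mul_gaussianPDFReal_le_iff {ε u : ℝ} (hu : 0 < u) (x : ℝ) :
    Real.exp ε * gaussianPDFReal 0 1 x ≤ gaussianPDFReal u 1 x ↔ u / 2 + ε / u ≤ x := by
  simp only [gaussianPDFReal, NNReal.coe_one, mul_one, sub_zero]
  rw [mul_left_comm, ← Real.exp_add, mul_le_mul_iff_right₀ (by positivity), Real.exp_le_exp,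
    div_add_div _ _ (two_ne_zero) hu.ne', div_le_iff₀ (by positivity)]
  constructor <;> intro h <;> nlinarith

lemma exp_mul_gaussianPDFReal_reflect (ε : ℝ) {u : ℝ} (hu : u ≠ 0) :
    Real.exp ε * gaussianPDFReal 0 1 (-(u / 2) - ε / u) = gaussianPDFReal 0 1 (u / 2 - ε / u) := by
  simp only [gaussianPDFReal, NNReal.coe_one, mul_one, sub_zero]
  rw [mul_left_comm, ← Real.exp_add]
  congr 2
  field_simp
  ring

lemma hasDerivAt_cdf_gaussianReal (m : ℝ) {v : ℝ≥0} (hv : v ≠ 0) (x : ℝ) :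
    HasDerivAt (cdf (gaussianReal m v)) (gaussianPDFReal m v x) x := by
  have hint := integrable_gaussianPDFReal m v
  have hcont : Continuous (gaussianPDFReal m v) := by unfold gaussianPDFReal; fun_prop
  have hcdf : cdf (gaussianReal m v) = fun y =>
      (∫ t in Iic 0, gaussianPDFReal m v t) + ∫ t in (0 : ℝ)..y, gaussianPDFReal m v t := by
    ext y
    rw [← intervalIntegral.integral_Iic_sub_Iic hint.integrableOn hint.integrableOn,
      add_sub_cancel, cdf_eq_real, measureReal_def, gaussianReal_apply_eq_integral _ hv,
      ENNReal.toReal_ofReal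
        (setIntegral_nonneg measurableSet_Iic fun t _ => gaussianPDFReal_nonneg _ _ _)]
  rw [hcdf]
  exact (intervalIntegral.integral_hasDerivAt_right hint.intervalIntegrable
    hcont.stronglyMeasurable.stronglyMeasurableAtFilter hcont.continuousAt).const_add _

/-- The hockey-stick divergence `sup_S (N(u,1)(S) - e^ε N(0,1)(S))`, for `u > 0`. -/
noncomputable def gaussianHockeyStick (ε u : ℝ) : ℝ :=
  Φ (u / 2 - ε / u) - Real.exp ε * Φ (-(u / 2) - ε / u)

lemma hasDerivAt_gaussianHockeyStick (ε : ℝ) {u : ℝ} (hu : u ≠ 0) :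
    HasDerivAt (gaussianHockeyStick ε) (gaussianPDFReal 0 1 (u / 2 - ε / u)) u := by
  have hinv : HasDerivAt (fun u : ℝ => ε / u) (-(ε / u ^ 2)) u := by
    simpa [div_eq_mul_inv] using (hasDerivAt_inv hu).const_mul ε
  have ha := (hasDerivAt_cdf_gaussianReal 0 one_ne_zero (u / 2 - ε / u)).comp u
    (((hasDerivAt_id u).div_const 2).sub hinv)
  have hb := ((hasDerivAt_cdf_gaussianReal 0 one_ne_zero (-(u / 2) - ε / u)).comp u
    (((hasDerivAt_id u).div_const 2).neg.sub hinv)).const_mul (Real.exp ε)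
  refine (ha.sub hb).congr_deriv ?_
  rw [← mul_assoc, exp_mul_gaussianPDFReal_reflect ε hu]
  ring

lemma monotoneOn_gaussianHockeyStick (ε : ℝ) : MonotoneOn (gaussianHockeyStick ε) (Ioi 0) :=
  monotoneOn_of_hasDerivWithinAt_nonneg (convex_Ioi 0)
    (fun _ hu => (hasDerivAt_gaussianHockeyStick ε (ne_of_gt hu)).continuousAt.continuousWithinAt)
    (fun u hu => (hasDerivAt_gaussianHockeyStick ε
      (ne_of_gt (interior_subset hu : (0 : ℝ) < u))).hasDerivWithinAt)
    (fun _ _ => gaussianPDFReal_nonneg _ _ _)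

lemma setOf_exp_mul_gaussianPDF_le {ε u : ℝ} (hu : 0 < u) :
    {x | ENNReal.ofReal (Real.exp ε) * gaussianPDF 0 1 x ≤ gaussianPDF u 1 x}
      = Ici (u / 2 + ε / u) := by
  ext x
  rw [mem_ofPred_eq, mem_Ici, gaussianPDF, gaussianPDF, ← ENNReal.ofReal_mul (Real.exp_nonneg ε),
    ENNReal.ofReal_le_ofReal_iff (gaussianPDFReal_nonneg _ _ _)]
  exact exp_mul_gaussianPDFReal_le_iff hu x

lemma measureReal_gaussianReal_one_le {ε u : ℝ} (hu : 0 < u) {S : Set ℝ} (hS : MeasurableSet S) :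
    (gaussianReal u 1).real S
      ≤ Real.exp ε * (gaussianReal 0 1).real S + gaussianHockeyStick ε u := by
  have hNP := withDensity_add_mul_le (μ := volume) (measurable_gaussianPDF u 1)
    (measurable_gaussianPDF 0 1) (ENNReal.ofReal (Real.exp ε)) hS
  rw [← gaussianReal_of_var_ne_zero _ one_ne_zero, ← gaussianReal_of_var_ne_zero _ one_ne_zero,
    setOf_exp_mul_gaussianPDF_le hu, gaussianReal_one_Ici, gaussianReal_one_Ici] at hNP
  have hreal := ENNReal.toReal_mono (by finiteness) hNP
  simp only [ENNReal.toReal_add, ENNReal.toReal_mul, ENNReal.toReal_ofReal, Real.exp_nonneg,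
    cdf_nonneg, ne_eq, measure_ne_top, ENNReal.ofReal_ne_top, not_false_eq_true, ENNReal.mul_ne_top,
    ← measureReal_def] at hreal
  rw [gaussianHockeyStick, show u / 2 - ε / u = u - (u / 2 + ε / u) by ring,
    show -(u / 2) - ε / u = 0 - (u / 2 + ε / u) by ring]
  linarith

lemma gaussianHockeyStick_nonneg (ε : ℝ) {u : ℝ} (hu : 0 < u) : 0 ≤ gaussianHockeyStick ε u := by
  simpa using measureReal_gaussianReal_one_le (ε := ε) hu MeasurableSet.empty

lemma gaussianReal_map_affine (a b c : ℝ) :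
    (gaussianReal c 1).map (fun x => a * x + b) = gaussianReal (a * c + b) (a ^ 2).toNNReal := by
  have h : (fun x => a * x + b) = (· + b) ∘ (a * ·) := rfl
  rw [h, ← Measure.map_map (measurable_add_const b) (measurable_const_mul a),
    gaussianReal_map_const_mul, gaussianReal_map_add_const, mul_one,
    Real.toNNReal_of_nonneg (sq_nonneg a)]

lemma measureReal_gaussianReal_le {σ ε Δ m m' : ℝ} (hσ : 0 < σ) (hε : 0 ≤ ε) (hΔ : 0 < Δ)
    (hm : |m - m'| ≤ Δ) {S : Set ℝ} (hS : MeasurableSet S) :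
    (gaussianReal m (σ ^ 2).toNNReal).real S
      ≤ Real.exp ε * (gaussianReal m' (σ ^ 2).toNNReal).real S
        + gaussianHockeyStick ε (Δ / σ) := by
  have hG := gaussianHockeyStick_nonneg ε (div_pos hΔ hσ)
  rcases eq_or_ne m m' with rfl | hne
  · nlinarith [Real.add_one_le_exp ε,
      measureReal_nonneg (μ := gaussianReal m (σ ^ 2).toNNReal) (s := S)]
  set u := |m - m'| / σ
  have hu : 0 < u := div_pos (abs_pos.mpr (sub_ne_zero.mpr hne)) hσ
  obtain ⟨a, ha, hma⟩ : ∃ a, a ^ 2 = σ ^ 2 ∧ m = a * u + m' := by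
    rcases abs_cases (m - m') with ⟨h, -⟩ | ⟨h, -⟩
    · exact ⟨σ, rfl, by simp only [u, h]; field_simp; ring⟩
    · exact ⟨-σ, neg_sq σ, by simp only [u, h]; field_simp; ring⟩
  have hmono : gaussianHockeyStick ε u ≤ gaussianHockeyStick ε (Δ / σ) :=
    monotoneOn_gaussianHockeyStick ε hu (div_pos hΔ hσ) (div_le_div_of_nonneg_right hm hσ.le)
  have hP : gaussianReal m (σ ^ 2).toNNReal = (gaussianReal u 1).map (fun x => a * x + m') := by
    rw [gaussianReal_map_affine, ha, hma]
  have hQ : gaussianReal m' (σ ^ 2).toNNReal = (gaussianReal 0 1).map (fun x => a * x + m') := by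
    rw [gaussianReal_map_affine, ha, mul_zero, zero_add]
  have hφ : Measurable fun x => a * x + m' := by fun_prop
  rw [hP, hQ, map_measureReal_apply hφ hS, map_measureReal_apply hφ hS]
  linarith [measureReal_gaussianReal_one_le (ε := ε) hu (hφ hS)]

lemma gaussianReal_le_ofReal_exp_mul_add {σ ε Δ δ m m' : ℝ} (hσ : 0 < σ) (hε : 0 ≤ ε)
    (hΔ : 0 < Δ) (hδ : gaussianHockeyStick ε (Δ / σ) ≤ δ) (hm : |m - m'| ≤ Δ)
    {S : Set ℝ} (hS : MeasurableSet S) :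
    gaussianReal m (σ ^ 2).toNNReal S
      ≤ ENNReal.ofReal (Real.exp ε) * gaussianReal m' (σ ^ 2).toNNReal S + ENNReal.ofReal δ := by
  have hδ0 := (gaussianHockeyStick_nonneg ε (div_pos hΔ hσ)).trans hδ
  rw [← ofReal_measureReal, ← ofReal_measureReal, ← ENNReal.ofReal_mul (Real.exp_nonneg ε),
    ← ENNReal.ofReal_add (by positivity) hδ0]
  exact ENNReal.ofReal_le_ofReal
    ((measureReal_gaussianReal_le hσ hε hΔ hm hS).trans (by gcongr))

theorem gaussian_mechanism_eps_delta_general {X : Type*} [MeasurableSpace X] {n : ℕ}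
    (Δ σ ε δ : ℝ) (hΔ : 0 < Δ) (hσ : 0 < σ) (hε : 0 ≤ ε)
    (hδ : cdf (gaussianReal 0 1) (Δ / (2 * σ) - ε * σ / Δ)
        - Real.exp ε * cdf (gaussianReal 0 1) (-(Δ / (2 * σ)) - ε * σ / Δ) ≤ δ)
    (A : Kernel (Fin n → X) ℝ)
    (q : (Fin n → X) → ℝ)
    (hq : ∀ D D' : Fin n → X, Adjacent D D' → |q D - q D'| ≤ Δ)
    (hA : ∀ D, A D = gaussianReal (q D) (σ ^ 2).toNNReal) :
    (∀ S : Set ℝ, MeasurableSet S →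
      gaussianReal 0 (σ ^ 2).toNNReal S
          ≤ ENNReal.ofReal (Real.exp ε) * gaussianReal Δ (σ ^ 2).toNNReal S
            + ENNReal.ofReal δ ∧
      gaussianReal Δ (σ ^ 2).toNNReal S
          ≤ ENNReal.ofReal (Real.exp ε) * gaussianReal 0 (σ ^ 2).toNNReal S
            + ENNReal.ofReal δ) ∧
    (∀ S : Set ℝ, MeasurableSet S → ∀ D D' : Fin n → X, Adjacent D D' →
      A D S ≤ ENNReal.ofReal (Real.exp ε) * A D' S + ENNReal.ofReal δ) := by
  have hG : gaussianHockeyStick ε (Δ / σ) ≤ δ := by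
    rwa [gaussianHockeyStick, div_div, mul_comm σ, div_div_eq_mul_div]
  have hΔ' : |Δ| ≤ Δ := (abs_of_pos hΔ).le
  refine ⟨fun S hS => ⟨?_, ?_⟩, fun S hS D D' hDD' => ?_⟩
  · exact gaussianReal_le_ofReal_exp_mul_add hσ hε hΔ hG (by rwa [zero_sub, abs_neg]) hS
  · exact gaussianReal_le_ofReal_exp_mul_add hσ hε hΔ hG (by rwa [sub_zero]) hS
  · rw [hA D, hA D']
    exact gaussianReal_le_ofReal_exp_mul_add hσ hε hΔ hG (hq D D' hDD') hS

/-- If `δ ≥ Φ(Δ/(2σ) − εσ/Δ) − e^ε Φ(−Δ/(2σ) − εσ/Δ)`, then the Gaussian measures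
`P = N(0,σ²)` and `Q = N(Δ,σ²)` satisfy `P(S) ≤ e^ε Q(S) + δ` and `Q(S) ≤ e^ε P(S) + δ`
for every measurable `S ⊆ ℝ`; consequently, a one-dimensional Gaussian mechanism
`D ↦ N(q(D), σ²)` for a query `q` with `|q(D) − q(D')| ≤ Δ` on adjacent datasets is
`(ε,δ)`-differentially private. -/
theorem gaussian_mechanism_eps_delta {X : Type*} [MeasurableSpace X] {n : ℕ}
    (Δ σ ε δ : ℝ) (hΔ : 0 < Δ) (hσ : 0 < σ) (hε : 0 ≤ ε)
    (hδ : cdf (gaussianReal 0 1) (Δ / (2 * σ) - ε * σ / Δ)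
        - Real.exp ε * cdf (gaussianReal 0 1) (-(Δ / (2 * σ)) - ε * σ / Δ) ≤ δ)
    (A : Kernel (Fin n → X) ℝ) [IsMarkovKernel A]
    (q : (Fin n → X) → ℝ)
    (hq : ∀ D D' : Fin n → X, Adjacent D D' → |q D - q D'| ≤ Δ)
    (hA : ∀ D, A D = gaussianReal (q D) (σ ^ 2).toNNReal) :
    (∀ S : Set ℝ, MeasurableSet S →
      gaussianReal 0 (σ ^ 2).toNNReal S
          ≤ ENNReal.ofReal (Real.exp ε) * gaussianReal Δ (σ ^ 2).toNNReal S
            + ENNReal.ofReal δ ∧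
      gaussianReal Δ (σ ^ 2).toNNReal S
          ≤ ENNReal.ofReal (Real.exp ε) * gaussianReal 0 (σ ^ 2).toNNReal S
            + ENNReal.ofReal δ) ∧
    (∀ S : Set ℝ, MeasurableSet S → ∀ D D' : Fin n → X, Adjacent D D' →
      A D S ≤ ENNReal.ofReal (Real.exp ε) * A D' S + ENNReal.ofReal δ) :=
  gaussian_mechanism_eps_delta_general Δ σ ε δ hΔ hσ hε hδ A q hq hA
end
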